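/- Let R = ⊕_{i=1}^t R_i be a direct sum of subrings R_i with units e_i (so e_1,…,e_t are orthogonal idempotents summing to 1), and let N be an R-module. Then N = ⊕_{i=1}^t e_i N as R-modules, and e_i N is annihilated by R_j for all j ≠ i. If moreover N is an R-brace, then each N_i = e_i N is a left R-ideal of N; and the N_i are all ideals of N if and only if N ≅ N_1 × ⋯ × N_t as braces. -/

import Mathlib

/-- A (left) brace structure on an abelian group `N`. -/
structure BraceStruct (N : Type*) [AddCommGroup N] where
  circ : N → N → N
  cinv : N → N
  circ_assoc : ∀ x y z, circ (circ x y) z = circ x (circ y z)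
  zero_circ : ∀ x, circ 0 x = x
  circ_zero : ∀ x, circ x 0 = x
  cinv_circ : ∀ x, circ (cinv x) x = 0
  circ_cinv : ∀ x, circ x (cinv x) = 0
  brace : ∀ x y z, circ x (y + z) = circ x y - x + circ x z

/-- The gamma function of a brace: γ_x(y) = -x + x∘y. -/
def BraceStruct.gamma {N : Type*} [AddCommGroup N] (B : BraceStruct N)
    (x y : N) : N := -x + B.circ x y

/-- A brace whose additive group is an `R`-module is an `R`-brace when every
γ_x is an `R`-module automorphism (equivalently, is `R`-linear). -/
def BraceStruct.IsRBrace (R : Type*) {N : Type*} [Ring R] [AddCommGroup N]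
    [Module R N] (B : BraceStruct N) : Prop :=
  ∀ (x : N) (r : R) (y : N), B.gamma x (r • y) = r • B.gamma x y

/-! In an `R`-brace every `γ_x` commutes with the idempotents, so each `eᵢN` is a left ideal.
If `eᵢN` is also normal in `(N, ∘)` then `γ_z(v) - v ∈ eᵢN` for `z ∈ eᵢN`; when `eᵢv = 0` this
element is also killed by `eᵢ`, so it vanishes. Hence `∘` agrees with `+` on elements of
different components, and writing `g` as the `∘`-product of its components shows that `γ_g`
acts on `eᵢN` as `γ_{eᵢg}`, which is the componentwise formula. Conversely, the componentwise
formula gives `γ_a(b) - b = eᵢ • (γ_a(b) - b)` for `a ∈ eᵢN`, which makes `eᵢN` normal. -/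

namespace BraceStruct

variable {N : Type*} [AddCommGroup N] (B : BraceStruct N)

def IsLeftIdeal (I : AddSubgroup N) : Prop :=
  ∀ g x, x ∈ I → B.gamma g x ∈ I

def IsCircNormal (I : AddSubgroup N) : Prop :=
  ∀ g x, x ∈ I → B.circ (B.circ g x) (B.cinv g) ∈ I

theorem circ_eq_add_gamma (x y : N) : B.circ x y = x + B.gamma x y := by
  rw [gamma]; abel

@[simp]
theorem gamma_zero (x : N) : B.gamma x 0 = 0 := by
  rw [gamma, B.circ_zero]; abel

@[simp]
theorem zero_gamma (y : N) : B.gamma 0 y = y := by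
  rw [gamma, B.zero_circ]; abel

theorem gamma_add (x y z : N) : B.gamma x (y + z) = B.gamma x y + B.gamma x z := by
  simp only [gamma, B.brace]; abel

def gammaHom (x : N) : N →+ N where
  toFun := B.gamma x
  map_zero' := B.gamma_zero x
  map_add' := B.gamma_add x

theorem gamma_sub (x y z : N) : B.gamma x (y - z) = B.gamma x y - B.gamma x z :=
  map_sub (B.gammaHom x) y z

theorem gamma_sum {ι : Type*} (s : Finset ι) (x : N) (y : ι → N) :
    B.gamma x (∑ i ∈ s, y i) = ∑ i ∈ s, B.gamma x (y i) :=
  map_sum (B.gammaHom x) y s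

theorem gamma_circ (x y z : N) : B.gamma (B.circ x y) z = B.gamma x (B.gamma y z) := by
  rw [gamma, B.circ_assoc, circ_eq_add_gamma B y, B.brace, circ_eq_add_gamma B x (B.gamma y z)]
  abel

theorem gamma_cinv (x : N) : B.gamma x (B.cinv x) = -x := by
  rw [gamma, B.circ_cinv]; abel

theorem cinv_cinv (x : N) : B.cinv (B.cinv x) = x := by
  calc B.cinv (B.cinv x) = B.circ (B.circ (B.cinv (B.cinv x)) (B.cinv x)) x := by
        rw [B.circ_assoc, B.cinv_circ, B.circ_zero]
    _ = x := by rw [B.cinv_circ, B.zero_circ]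

theorem isCircNormal_iff_gamma_sub_self_mem {I : AddSubgroup N} (hI : B.IsLeftIdeal I) :
    B.IsCircNormal I ↔ ∀ a ∈ I, ∀ b, B.gamma a b - b ∈ I := by
  constructor
  · intro hn a ha b
    -- `a ∘ b = b ∘ a'` with `a' = b⁻ ∘ a ∘ b ∈ I`
    have ha' := hn (B.cinv b) a ha
    rw [cinv_cinv] at ha'
    have hab : B.circ a b = B.circ b (B.circ (B.circ (B.cinv b) a) b) := by
      rw [← B.circ_assoc, ← B.circ_assoc, B.circ_cinv, B.zero_circ]
    rw [circ_eq_add_gamma, circ_eq_add_gamma B b] at hab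
    have : B.gamma a b - b = B.gamma b (B.circ (B.circ (B.cinv b) a) b) - a := by
      rw [sub_eq_sub_iff_add_eq_add, add_comm, hab, add_comm]
    rw [this]
    exact sub_mem (hI b _ ha') ha
  · intro h g x hx
    have hconj : B.circ (B.circ g x) (B.cinv g)
        = B.gamma g x + B.gamma g (B.gamma x (B.cinv g) - B.cinv g) := by
      rw [B.circ_assoc, circ_eq_add_gamma, circ_eq_add_gamma B x, gamma_sub, gamma_add,
        gamma_cinv]
      abel
    rw [hconj]
    exact add_mem (hI g x hx) (hI g _ (h x hx _))

end BraceStruct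

section Idempotents

variable {R N : Type*} [Semiring R] [AddCommGroup N] [Module R N]

variable (N) in
def smulRange (e : R) : AddSubgroup N :=
  (DistribSMul.toAddMonoidHom N e).range

theorem mem_smulRange {e : R} {x : N} : x ∈ smulRange N e ↔ ∃ m, x = e • m := by
  simp only [smulRange, AddMonoidHom.mem_range, DistribSMul.toAddMonoidHom_apply, eq_comm]

theorem smul_mem_smulRange (e : R) (m : N) : e • m ∈ smulRange N e :=
  mem_smulRange.2 ⟨m, rfl⟩

theorem IsIdempotentElem.mem_smulRange_iff {e : R} (he : IsIdempotentElem e) {x : N} :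
    x ∈ smulRange N e ↔ e • x = x := by
  refine ⟨fun hx => ?_, fun hx => mem_smulRange.2 ⟨x, hx.symm⟩⟩
  obtain ⟨m, rfl⟩ := mem_smulRange.1 hx
  rw [smul_smul, he.eq]

variable {ι : Type*} {e : ι → R}

theorem OrthogonalIdempotents.smul_eq_zero_of_mem_smulRange (he : OrthogonalIdempotents e)
    {i j : ι} (hij : i ≠ j) {x : N} (hx : x ∈ smulRange N (e j)) : e i • x = 0 := by
  obtain ⟨m, rfl⟩ := mem_smulRange.1 hx
  rw [smul_smul, he.ortho hij, zero_smul]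

variable [Fintype ι]

theorem CompleteOrthogonalIdempotents.sum_smul_eq_self (he : CompleteOrthogonalIdempotents e)
    (x : N) : ∑ i, e i • x = x := by
  rw [← Finset.sum_smul, he.complete, one_smul]

theorem CompleteOrthogonalIdempotents.existsUnique_sum_eq
    (he : CompleteOrthogonalIdempotents e) (n : N) :
    ∃! c : ι → N, (∀ i, c i ∈ smulRange N (e i)) ∧ n = ∑ i, c i := by
  refine ⟨fun i => e i • n, ⟨fun i => smul_mem_smulRange _ _, (he.sum_smul_eq_self n).symm⟩, ?_⟩
  rintro c ⟨hc, rfl⟩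
  funext i
  classical
  rw [Finset.smul_sum, Finset.sum_eq_single i (fun j _ hji => he.smul_eq_zero_of_mem_smulRange
    (Ne.symm hji) (hc j)) (by simp), ((he.idem i).mem_smulRange_iff).1 (hc i)]

end Idempotents

namespace BraceStruct

variable {R N : Type*} [Ring R] [AddCommGroup N] [Module R N]
variable (B : BraceStruct N)

theorem isLeftIdeal_smulRange (hB : B.IsRBrace R) (e : R) : B.IsLeftIdeal (smulRange N e) := by
  intro g x hx
  obtain ⟨m, rfl⟩ := mem_smulRange.1 hx
  rw [hB]
  exact smul_mem_smulRange e _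

theorem gamma_eq_self_of_smul_eq_zero (hB : B.IsRBrace R) {e : R} (he : IsIdempotentElem e)
    (hn : B.IsCircNormal (smulRange N e)) {z v : N} (hz : z ∈ smulRange N e)
    (hv : e • v = 0) : B.gamma z v = v := by
  have hmem := (B.isCircNormal_iff_gamma_sub_self_mem (B.isLeftIdeal_smulRange hB e)).1 hn z hz v
  rw [he.mem_smulRange_iff, smul_sub, ← hB, hv, gamma_zero, zero_sub_zero] at hmem
  exact sub_eq_zero.1 hmem.symm

variable {ι : Type*} [Fintype ι] {e : ι → R}

theorem gamma_sum_smul_apply_eq_self_of_notMem (hB : B.IsRBrace R)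
    (he : CompleteOrthogonalIdempotents e)
    (hn : ∀ i, B.IsCircNormal (smulRange N (e i))) {i : ι} {z : N} (hz : z ∈ smulRange N (e i))
    (w : N) {S : Finset ι} (hS : i ∉ S) : B.gamma ((∑ k ∈ S, e k) • w) z = z := by
  classical
  induction S using Finset.induction_on with
  | empty => rw [Finset.sum_empty, zero_smul, zero_gamma]
  | @insert a S haS ih =>
    obtain ⟨hia, hiS⟩ := not_or.1 (Finset.mem_insert.not.1 hS)
    have hw := smul_mem_smulRange (e a) w
    have hrest : e a • (∑ k ∈ S, e k) • w = 0 := by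
      rw [smul_smul, he.mul_sum_of_notMem haS, zero_smul]
    have hcirc : e a • w + (∑ k ∈ S, e k) • w = B.circ (e a • w) ((∑ k ∈ S, e k) • w) := by
      rw [circ_eq_add_gamma, B.gamma_eq_self_of_smul_eq_zero hB (he.idem a) (hn a) hw hrest]
    rw [Finset.sum_insert haS, add_smul, hcirc, gamma_circ, ih hiS,
      B.gamma_eq_self_of_smul_eq_zero hB (he.idem a) (hn a) hw
        (he.smul_eq_zero_of_mem_smulRange (Ne.symm hia) hz)]

theorem gamma_apply_eq_self_of_smul_eq_zero (hB : B.IsRBrace R)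
    (he : CompleteOrthogonalIdempotents e) (hn : ∀ i, B.IsCircNormal (smulRange N (e i)))
    {i : ι} {z w : N} (hz : z ∈ smulRange N (e i)) (hw : e i • w = 0) : B.gamma w z = z := by
  classical
  have := B.gamma_sum_smul_apply_eq_self_of_notMem hB he hn hz w
    (Finset.notMem_erase i Finset.univ)
  rwa [Finset.sum_erase_eq_sub (Finset.mem_univ i), he.complete, sub_smul, one_smul, hw,
    sub_zero] at this

theorem gamma_eq_gamma_smul_of_mem (hB : B.IsRBrace R) (he : CompleteOrthogonalIdempotents e)
    (hn : ∀ i, B.IsCircNormal (smulRange N (e i))) {i : ι} {z : N} (hz : z ∈ smulRange N (e i))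
    (g : N) : B.gamma g z = B.gamma (e i • g) z := by
  have hrest : e i • (g - e i • g) = 0 := by rw [smul_sub, smul_smul, (he.idem i).eq, sub_self]
  have hcirc : g = B.circ (g - e i • g) (e i • g) := by
    rw [circ_eq_add_gamma, B.gamma_apply_eq_self_of_smul_eq_zero hB he hn
      (smul_mem_smulRange _ _) hrest, sub_add_cancel]
  rw [hcirc, gamma_circ, B.gamma_apply_eq_self_of_smul_eq_zero hB he hn
    (B.isLeftIdeal_smulRange hB _ _ _ hz) hrest, ← hcirc]

theorem gamma_eq_sum_of_isCircNormal (hB : B.IsRBrace R) (he : CompleteOrthogonalIdempotents e)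
    (hn : ∀ i, B.IsCircNormal (smulRange N (e i))) (x y : N) :
    B.gamma x y = ∑ i, B.gamma (e i • x) (e i • y) := by
  conv_lhs => rw [← he.sum_smul_eq_self y, gamma_sum]
  exact Finset.sum_congr rfl fun i _ =>
    B.gamma_eq_gamma_smul_of_mem hB he hn (smul_mem_smulRange _ _) x

theorem gamma_sub_self_eq_of_gamma_eq_sum (he : CompleteOrthogonalIdempotents e)
    (H : ∀ x y, B.gamma x y = ∑ i, B.gamma (e i • x) (e i • y)) {i : ι} {a : N}
    (ha : a ∈ smulRange N (e i)) (b : N) :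
    B.gamma a b - b = B.gamma a (e i • b) - e i • b := by
  classical
  have hoff : ∀ j ∈ Finset.univ.erase i, B.gamma (e j • a) (e j • b) = e j • b := fun j hj =>
    by rw [he.smul_eq_zero_of_mem_smulRange (Finset.ne_of_mem_erase hj) ha, zero_gamma]
  rw [H, ← Finset.add_sum_erase _ _ (Finset.mem_univ i), Finset.sum_congr rfl hoff,
    Finset.sum_erase_eq_sub (Finset.mem_univ i), he.sum_smul_eq_self,
    ((he.idem i).mem_smulRange_iff).1 ha]
  abel

theorem isCircNormal_of_gamma_eq_sum (hB : B.IsRBrace R) (he : CompleteOrthogonalIdempotents e)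
    (H : ∀ x y, B.gamma x y = ∑ i, B.gamma (e i • x) (e i • y)) (i : ι) :
    B.IsCircNormal (smulRange N (e i)) := by
  refine (B.isCircNormal_iff_gamma_sub_self_mem (B.isLeftIdeal_smulRange hB _)).2 fun a ha b => ?_
  rw [B.gamma_sub_self_eq_of_gamma_eq_sum he H ha, hB, ← smul_sub]
  exact smul_mem_smulRange _ _

theorem forall_isCircNormal_smulRange_iff (hB : B.IsRBrace R)
    (he : CompleteOrthogonalIdempotents e) :
    (∀ i, B.IsCircNormal (smulRange N (e i))) ↔
      ∀ x y, B.gamma x y = ∑ i, B.gamma (e i • x) (e i • y) :=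
  ⟨B.gamma_eq_sum_of_isCircNormal hB he, B.isCircNormal_of_gamma_eq_sum hB he⟩

end BraceStruct

theorem module_brace_splitting_general
    {R N : Type*} [CommRing R] [AddCommGroup N] [Module R N]
    (t : ℕ) (e : Fin t → R)
    (horth : ∀ i j, i ≠ j → e i * e j = 0)
    (hone : ∑ i, e i = 1)
    (B : BraceStruct N) (hB : B.IsRBrace R) :
    (∀ n : N, ∃! c : Fin t → N,
        (∀ i, ∃ m : N, c i = e i • m) ∧ n = ∑ i, c i) ∧
    (∀ i j, i ≠ j → ∀ (r : R) (m : N), (e j * r) • (e i • m) = 0) ∧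
    (∀ (i : Fin t) (g x : N), (∃ m : N, x = e i • m) →
        ∃ m : N, B.gamma g x = e i • m) ∧
    ((∀ (i : Fin t) (g x : N), (∃ m : N, x = e i • m) →
        ∃ m : N, B.circ (B.circ g x) (B.cinv g) = e i • m) ↔
      (∀ x y : N, B.gamma x y = ∑ i, B.gamma (e i • x) (e i • y))) := by
  have he : CompleteOrthogonalIdempotents e :=
    CompleteOrthogonalIdempotents.iff_ortho_complete.2 ⟨horth, hone⟩
  simp only [← mem_smulRange]
  refine ⟨he.existsUnique_sum_eq, fun i j hij r m => ?_, fun i => B.isLeftIdeal_smulRange hB (e i),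
    B.forall_isCircNormal_smulRange_iff hB he⟩
  rw [mul_comm, mul_smul,
    he.smul_eq_zero_of_mem_smulRange (Ne.symm hij) (smul_mem_smulRange _ _), smul_zero]

/-- let R be a commutative ring which is the direct sum of
subrings R_i with units e_i (so the e_i are orthogonal idempotents summing
to 1), and let N be an R-module. Then N is the internal direct sum of the
submodules N_i = e_iN, each N_i is annihilated by R_j = e_jR for j ≠ i; if
moreover N is an R-brace then each N_i is a left ideal, and the N_i are all
ideals iff the decomposition is a decomposition of braces, i.e. the gamma
function is computed componentwise. -/
theorem module_brace_splitting
    {R N : Type*} [CommRing R] [AddCommGroup N] [Module R N]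
    (t : ℕ) (e : Fin t → R)
    (hidem : ∀ i, e i * e i = e i)
    (horth : ∀ i j, i ≠ j → e i * e j = 0)
    (hone : ∑ i, e i = 1)
    (B : BraceStruct N) (hB : B.IsRBrace R) :
    (∀ n : N, ∃! c : Fin t → N,
        (∀ i, ∃ m : N, c i = e i • m) ∧ n = ∑ i, c i) ∧
    (∀ i j, i ≠ j → ∀ (r : R) (m : N), (e j * r) • (e i • m) = 0) ∧
    (∀ (i : Fin t) (g x : N), (∃ m : N, x = e i • m) →
        ∃ m : N, B.gamma g x = e i • m) ∧
    ((∀ (i : Fin t) (g x : N), (∃ m : N, x = e i • m) →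
        ∃ m : N, B.circ (B.circ g x) (B.cinv g) = e i • m) ↔
      (∀ x y : N, B.gamma x y = ∑ i, B.gamma (e i • x) (e i • y))) :=
  module_brace_splitting_general t e horth hone B hB
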